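/- arXiv:2308.13689 — 3 statements merged into one kernel-verified Lean document; each statement's English description precedes it below -/
import Mathlib

section
/- The pocset of half-spaces (Proposition 'pocset', finite case): Let a hierarchical family of trees be given, with 0-consistent set Q. Then every half-space of Q is nonempty and disjoint from its complementary half-space. Call two walls transverse if, for half-spaces A of the first and B of the second, none of the four inclusions A ⊆ B, A ⊆ B*, A* ⊆ B, A* ⊆ B* of subsets of Q holds (this is independent of the choice of A and B). Then: (1) if two walls labeled by domains U and V are transverse, then U ⊥ V; equivalently, if U and V are not orthogonal then at least one of the four inclusions holds; and (2) any family of pairwise transverse walls has cardinality at most the maximal cardinality of a pairwise-orthogonal subset of 𝒰. In particular, the half-spaces of Q, partially ordered by inclusion and equipped with the complementation involution, form a pocset of finite width. -/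
/-- `a` and `b` lie in the same connected component of the tree `G` with the vertex `w`
deleted (equivalently: `a, b ≠ w` and `w` does not lie on the geodesic from `a` to `b`). -/
def treeSameComp {α : Type*} (G : SimpleGraph α) (w a b : α) : Prop :=
  a ≠ w ∧ b ≠ w ∧ G.dist a w + G.dist w b ≠ G.dist a b

/-- `m` is the median of `a`, `b`, `c` in the tree `G`: it lies on all three
pairwise geodesics. -/
def IsTreeMedian {α : Type*} (G : SimpleGraph α) (a b c m : α) : Prop :=
  G.dist a m + G.dist m b = G.dist a b ∧
  G.dist a m + G.dist m c = G.dist a c ∧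
  G.dist b m + G.dist m c = G.dist b c

/-- A hierarchical family of trees: a finite index set `Idx` of domains with relations
`⊏` (proper nesting) and `⊥` (orthogonality), a finite simplicial tree `G U` on the
finite vertex set `Vtx U` for each domain `U`, marked vertices labeled by the finite set
`F`, and relative projection data `δup`/`δdown` satisfying coherence, bounded geodesic
image, and consistency of the marked tuples. -/
structure HFT (Idx : Type*) [Fintype Idx] (Vtx : Idx → Type*) [∀ U, Fintype (Vtx U)]
    (F : Type*) [Fintype F] where
  /-- proper nesting `⊏` -/
  pnest : Idx → Idx → Prop
  /-- orthogonality `⊥` -/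
  orth : Idx → Idx → Prop
  pnest_irrefl : ∀ U, ¬ pnest U U
  pnest_trans : ∀ U V W, pnest U V → pnest V W → pnest U W
  /-- `⊏` has a unique maximal element -/
  max_unique : ∃! m : Idx, ∀ W, ¬ pnest m W
  orth_symm : ∀ U V, orth U V → orth V U
  orth_irrefl : ∀ U, ¬ orth U U
  orth_not_pnest : ∀ U V, orth U V → ¬ pnest U V
  /-- the tree associated to each domain -/
  G : (U : Idx) → SimpleGraph (Vtx U)
  tree : ∀ U, (G U).IsTree
  /-- the marked vertex of `T_U` labeled by `f : F` -/
  mark : (U : Idx) → F → Vtx U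
  /-- every leaf is marked -/
  leaf_marked : ∀ (U : Idx) (v : Vtx U),
    Set.Subsingleton {w : Vtx U | (G U).Adj v w} → ∃ f : F, mark U f = v
  /-- the relative projection vertex `δup V U = δ^V_U ∈ T_U`
  (relevant when `V ⊏ U` or `V ⋔ U`) -/
  δup : (V U : Idx) → Vtx U
  /-- the relative projection map `δdown U V = δ^U_V : T_U → T_V` (for `V ⊏ U`) -/
  δdown : (U V : Idx) → Vtx U → Vtx V
  /-- every component of `T_U − δ^V_U` contains a marked vertex -/
  comp_marked : ∀ V U : Idx,
    (pnest V U ∨ (V ≠ U ∧ ¬ pnest V U ∧ ¬ pnest U V ∧ ¬ orth V U)) →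
    ∀ a : Vtx U, a ≠ δup V U → ∃ f : F, treeSameComp (G U) (δup V U) a (mark U f)
  /-- `δ^U_W = δ^V_W` whenever `U ⊥ V`, `V ⊏ W`, and `U ⊏ W` or `U ⋔ W` -/
  δ_coherent : ∀ U V W : Idx, orth U V → pnest V W →
    (pnest U W ∨ (U ≠ W ∧ ¬ pnest U W ∧ ¬ pnest W U ∧ ¬ orth U W)) →
    δup U W = δup V W
  /-- bounded geodesic image: `δ^U_V` is constant on each component of `T_U − δ^V_U` … -/
  bgi_const : ∀ U V : Idx, pnest V U → ∀ a b : Vtx U,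
    treeSameComp (G U) (δup V U) a b → δdown U V a = δdown U V b
  /-- … with value `f̂_V` on the component containing `f̂_U` -/
  bgi_mark : ∀ U V : Idx, pnest V U → ∀ f : F,
    mark U f ≠ δup V U → δdown U V (mark U f) = mark V f
  /-- the marked tuples are 0-consistent (transverse case) -/
  mark_consistent_t : ∀ (f : F) (U V : Idx),
    (U ≠ V ∧ ¬ pnest U V ∧ ¬ pnest V U ∧ ¬ orth U V) →
    mark U f = δup V U ∨ mark V f = δup U V
  /-- the marked tuples are 0-consistent (nested case) -/
  mark_consistent_n : ∀ (f : F) (U V : Idx), pnest V U →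
    mark U f = δup V U ∨ mark V f = δdown U V (mark U f)

namespace HFT

variable {Idx : Type*} [Fintype Idx] {Vtx : Idx → Type*} [∀ U, Fintype (Vtx U)]
  {F : Type*} [Fintype F]

/-- Transversality `U ⋔ V`: distinct, not nested either way, not orthogonal. -/
def transv (H : HFT Idx Vtx F) (U V : Idx) : Prop :=
  U ≠ V ∧ ¬ H.pnest U V ∧ ¬ H.pnest V U ∧ ¬ H.orth U V

/-- A tuple of vertices is 0-consistent. -/
def ZeroConsistent (H : HFT Idx Vtx F) (x : ∀ U, Vtx U) : Prop :=
  (∀ U V, H.transv U V → x U = H.δup V U ∨ x V = H.δup U V) ∧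
  (∀ U V, H.pnest V U → x U = H.δup V U ∨ x V = H.δdown U V (x U))

/-- The set `Q` of all 0-consistent tuples. -/
def Q (H : HFT Idx Vtx F) : Set (∀ U, Vtx U) := {x | H.ZeroConsistent x}

/-- The ℓ¹ metric on tuples: `d_Q(x, y) = Σ_U d_{T_U}(x_U, y_U)`. -/
noncomputable def dQ (H : HFT Idx Vtx F) (x y : ∀ U, Vtx U) : ℕ :=
  ∑ U : Idx, (H.G U).dist (x U) (y U)

/-- The half-tree of the edge `{u, v}` of `T_U` on the `u`-side: the vertices strictly
closer to `u` than to `v`. -/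
def halfTree (H : HFT Idx Vtx F) (U : Idx) (u v : Vtx U) : Set (Vtx U) :=
  {w | (H.G U).dist w u < (H.G U).dist w v}

/-- The half-space of `Q` determined by the half-tree of `{u, v} ⊆ T_U` on the
`u`-side. -/
def halfSpace (H : HFT Idx Vtx F) (U : Idx) (u v : Vtx U) : Set (∀ W, Vtx W) :=
  {x | x ∈ H.Q ∧ x U ∈ H.halfTree U u v}

/-- Two walls (dual to the edge `{u, v}` of `T_U` and the edge `{u', v'}` of `T_V`)
cross: all four intersections of half-spaces are nonempty. -/
def Crosses (H : HFT Idx Vtx F) (U : Idx) (u v : Vtx U) (V : Idx) (u' v' : Vtx V) :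
    Prop :=
  (H.halfSpace U u v ∩ H.halfSpace V u' v').Nonempty ∧
  (H.halfSpace U u v ∩ H.halfSpace V v' u').Nonempty ∧
  (H.halfSpace U v u ∩ H.halfSpace V u' v').Nonempty ∧
  (H.halfSpace U v u ∩ H.halfSpace V v' u').Nonempty

/-- Two walls are transverse: none of the four inclusions among their half-spaces and
complements holds. -/
def WallTransverse (H : HFT Idx Vtx F) (U : Idx) (u v : Vtx U) (V : Idx)
    (u' v' : Vtx V) : Prop :=
  ¬ (H.halfSpace U u v ⊆ H.halfSpace V u' v') ∧
  ¬ (H.halfSpace U u v ⊆ H.halfSpace V v' u') ∧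
  ¬ (H.halfSpace U v u ⊆ H.halfSpace V u' v') ∧
  ¬ (H.halfSpace U v u ⊆ H.halfSpace V v' u')

end HFT

variable {Idx : Type*} [Fintype Idx] {Vtx : Idx → Type*} [∀ U, Fintype (Vtx U)]
  {F : Type*} [Fintype F]

/-!
If the labels `U`, `V` of two walls are not orthogonal, one of the four quadrants the walls cut
out of `Q` is empty. Two walls of the same tree are nested. If `V ⊏ U`, the half-tree of `T_U`
avoiding `δ^V_U` is convex, hence lies in one component of `T_U − δ^V_U`, so by bounded geodesic
image all points of `Q` over it have the same `V`-coordinate. If `U ⋔ V`, 0-consistency forbids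
`x_U` and `x_V` from avoiding `δ^V_U` and `δ^U_V` simultaneously. Pairwise transverse walls thus
have pairwise orthogonal, hence distinct, labels. A half-space is nonempty because its half-tree
contains a leaf, whose marked tuple is 0-consistent.
-/

namespace SimpleGraph

variable {α : Type*} {G : SimpleGraph α} {u v w x y : α}

/-- For an edge `{u, v}` of a tree, the half-tree on the `u`-side. -/
def halfTree (G : SimpleGraph α) (u v : α) : Set α := {w | G.dist w u < G.dist w v}

theorem mem_halfTree : w ∈ G.halfTree u v ↔ G.dist w u < G.dist w v := Iff.rfl

theorem not_mem_halfTree_swap_of_mem (hw : w ∈ G.halfTree u v) : w ∉ G.halfTree v u :=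
  lt_asymm (mem_halfTree.1 hw)

theorem not_mem_halfTree_or_not_mem_halfTree_swap (w : α) :
    w ∉ G.halfTree u v ∨ w ∉ G.halfTree v u :=
  not_and_or.1 fun h => not_mem_halfTree_swap_of_mem h.1 h.2

theorem Walk.dist_add_dist_of_length_eq_dist {m : α} {p : G.Walk x y}
    (hp : p.length = G.dist x y) (hm : m ∈ p.support) :
    G.dist x m + G.dist m y = G.dist x y := by
  classical
  refine le_antisymm ?_ ((p.takeUntil m hm).reachable.dist_triangle_left y)
  calc G.dist x m + G.dist m y
      ≤ (p.takeUntil m hm).length + (p.dropUntil m hm).length := add_le_add (dist_le _) (dist_le _)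
    _ = G.dist x y := by rw [← Walk.length_append, Walk.take_spec, hp]

namespace IsTree

theorem dist_eq_dist_add_one_of_adj' (hT : G.IsTree) (x : α) (h : G.Adj w y) :
    G.dist w x = G.dist y x + 1 ∨ G.dist y x = G.dist w x + 1 := by
  simpa only [dist_comm (u := x)] using hT.dist_eq_dist_add_one_of_adj x h

theorem mem_halfTree_or_mem_halfTree_swap (hT : G.IsTree) (huv : G.Adj u v) (w : α) :
    w ∈ G.halfTree u v ∨ w ∈ G.halfTree v u :=
  (hT.dist_ne_of_adj w huv).lt_or_gt

theorem dist_eq_add_one_of_mem_halfTree (hT : G.IsTree) (huv : G.Adj u v)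
    (hw : w ∈ G.halfTree u v) : G.dist w v = G.dist w u + 1 := by
  rw [mem_halfTree] at hw
  have := hT.dist_eq_dist_add_one_of_adj w huv
  omega

theorem eq_of_adj_of_mem_halfTree (hT : G.IsTree) (huv : G.Adj u v) (hxy : G.Adj x y)
    (hx : x ∈ G.halfTree u v) (hy : y ∈ G.halfTree v u) : x = u ∧ y = v := by
  have hxv := hT.dist_eq_add_one_of_mem_halfTree huv hx
  have hyu := hT.dist_eq_add_one_of_mem_halfTree huv.symm hy
  have := hT.dist_eq_dist_add_one_of_adj' u hxy
  have := hT.dist_eq_dist_add_one_of_adj' v hxy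
  have hvu : G.dist v u = 1 := dist_eq_one_iff_adj.2 huv.symm
  obtain ⟨p, hp⟩ := hT.connected.exists_walk_length_eq_dist x u
  obtain ⟨q, hq⟩ := hT.connected.exists_walk_length_eq_dist y v
  -- by acyclicity the path `y, x, …, u` meets `v`, and only its start `y` can be `v`
  have hyxu : (p.cons hxy.symm).IsPath :=
    Walk.isPath_of_length_eq_dist _ (by rw [Walk.length_cons]; omega)
  have hu : u ∉ q.support := fun hu => by
    have := Walk.dist_add_dist_of_length_eq_dist hq hu
    rw [dist_eq_one_iff_adj.2 huv] at this
    omega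
  have hv := hT.isAcyclic.mem_support_of_ne_mem_support_of_adj_of_isPath hyxu
    (q.isPath_of_length_eq_dist hq) huv hu
  rw [Walk.support_cons, List.mem_cons] at hv
  rcases hv with rfl | hv
  · rw [dist_self] at hq
    exact ⟨hT.connected.dist_eq_zero_iff.1 (by omega), rfl⟩
  · have := Walk.dist_add_dist_of_length_eq_dist hp hv
    omega

theorem mem_support_of_mem_halfTree (hT : G.IsTree) (huv : G.Adj u v) (p : G.Walk x y)
    (hx : x ∈ G.halfTree u v) (hy : y ∈ G.halfTree v u) : v ∈ p.support := by
  induction p with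
  | nil => exact absurd hy (not_mem_halfTree_swap_of_mem hx)
  | @cons x z y hxz q ih =>
    rw [Walk.support_cons, List.mem_cons]
    rcases hT.mem_halfTree_or_mem_halfTree_swap huv z with hz | hz
    · exact Or.inr (ih hz hy)
    · obtain ⟨-, rfl⟩ := hT.eq_of_adj_of_mem_halfTree huv hxz hx hz
      exact Or.inr q.start_mem_support

theorem dist_eq_of_mem_halfTree (hT : G.IsTree) (huv : G.Adj u v)
    (hx : x ∈ G.halfTree u v) (hy : y ∈ G.halfTree v u) :
    G.dist x y = G.dist x u + 1 + G.dist v y := by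
  obtain ⟨p, hp⟩ := hT.connected.exists_walk_length_eq_dist x y
  have := Walk.dist_add_dist_of_length_eq_dist hp (hT.mem_support_of_mem_halfTree huv p hx hy)
  have := hT.dist_eq_add_one_of_mem_halfTree huv hx
  omega

theorem mem_halfTree_of_dist_add_dist_eq (hT : G.IsTree) (huv : G.Adj u v) {a b m : α}
    (ha : a ∈ G.halfTree u v) (hb : b ∈ G.halfTree u v)
    (hm : G.dist a m + G.dist m b = G.dist a b) : m ∈ G.halfTree u v := by
  refine (hT.mem_halfTree_or_mem_halfTree_swap huv m).resolve_right fun hm' => ?_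
  have := hT.dist_eq_of_mem_halfTree huv ha hm'
  have := hT.dist_eq_of_mem_halfTree huv hb hm'
  have := hT.connected.dist_triangle (u := a) (v := u) (w := b)
  rw [dist_comm (u := m), dist_comm (u := u)] at *
  omega

theorem treeSameComp_of_mem_halfTree (hT : G.IsTree) (huv : G.Adj u v)
    (hw : w ∉ G.halfTree u v) {a b : α} (ha : a ∈ G.halfTree u v) (hb : b ∈ G.halfTree u v) :
    treeSameComp G w a b :=
  ⟨ne_of_mem_of_not_mem ha hw, ne_of_mem_of_not_mem hb hw,
    fun h => hw (hT.mem_halfTree_of_dist_add_dist_eq huv ha hb h)⟩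

theorem halfTree_subset_or_subset_of_mem_halfTree (hT : G.IsTree) (huv : G.Adj u v)
    {u' v' : α} (hu'v' : G.Adj u' v') (hu' : u' ∈ G.halfTree u v) (hv' : v' ∈ G.halfTree u v) :
    G.halfTree v u ⊆ G.halfTree u' v' ∨ G.halfTree v u ⊆ G.halfTree v' u' := by
  have sep := fun {x y} (hx : x ∈ G.halfTree v u) (hy : y ∈ G.halfTree u v) =>
    hT.dist_eq_of_mem_halfTree huv.symm hx hy
  rcases hT.mem_halfTree_or_mem_halfTree_swap hu'v' u with hu | hu
  · refine Or.inl fun x hx => ?_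
    rw [mem_halfTree, sep hx hu', sep hx hv']
    exact Nat.add_lt_add_left hu _
  · refine Or.inr fun x hx => ?_
    rw [mem_halfTree, sep hx hu', sep hx hv']
    exact Nat.add_lt_add_left hu _

theorem halfTree_subset_of_adj (hT : G.IsTree) (huv : G.Adj u v) {u' v' : α}
    (hu'v' : G.Adj u' v') :
    (G.halfTree u v ⊆ G.halfTree u' v' ∨ G.halfTree u v ⊆ G.halfTree v' u') ∨
      (G.halfTree v u ⊆ G.halfTree u' v' ∨ G.halfTree v u ⊆ G.halfTree v' u') := by
  rcases hT.mem_halfTree_or_mem_halfTree_swap huv u' with hu' | hu' <;>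
    rcases hT.mem_halfTree_or_mem_halfTree_swap huv v' with hv' | hv'
  · exact Or.inr (hT.halfTree_subset_or_subset_of_mem_halfTree huv hu'v' hu' hv')
  · obtain ⟨rfl, rfl⟩ := hT.eq_of_adj_of_mem_halfTree huv hu'v' hu' hv'
    exact Or.inl (Or.inl subset_rfl)
  · obtain ⟨rfl, rfl⟩ := hT.eq_of_adj_of_mem_halfTree huv hu'v'.symm hv' hu'
    exact Or.inl (Or.inr subset_rfl)
  · exact Or.inl (hT.halfTree_subset_or_subset_of_mem_halfTree huv.symm hu'v' hu' hv')

theorem eq_of_adj_of_dist_add_one_eq (hT : G.IsTree) {z₁ z₂ : α} (h₁ : G.Adj w z₁)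
    (h₂ : G.Adj w z₂) (hz₁ : G.dist z₁ x + 1 = G.dist w x) (hz₂ : G.dist z₂ x + 1 = G.dist w x) :
    z₁ = z₂ := by
  obtain ⟨p₁, hp₁⟩ := hT.connected.exists_walk_length_eq_dist z₁ x
  obtain ⟨p₂, hp₂⟩ := hT.connected.exists_walk_length_eq_dist z₂ x
  have hq₁ : (p₁.cons h₁).IsPath :=
    Walk.isPath_of_length_eq_dist _ (by rw [Walk.length_cons, hp₁, hz₁])
  have hq₂ : (p₂.cons h₂).IsPath :=
    Walk.isPath_of_length_eq_dist _ (by rw [Walk.length_cons, hp₂, hz₂])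
  have := congrArg (fun q : G.Path w x => (q : G.Walk w x).snd)
    ((hT.isAcyclic.subsingleton_path w x).elim ⟨_, hq₁⟩ ⟨_, hq₂⟩)
  simpa using this

/-- A vertex of the half-tree farthest from `v` is a leaf. -/
theorem exists_mem_halfTree_subsingleton_neighborSet [Finite α] (hT : G.IsTree)
    (huv : G.Adj u v) : ∃ w ∈ G.halfTree u v, (G.neighborSet w).Subsingleton := by
  obtain ⟨w, hw, hmax⟩ := Set.exists_max_image (G.halfTree u v) (G.dist · v)
    (Set.toFinite _) ⟨u, by simp [mem_halfTree, dist_eq_one_iff_adj.2 huv]⟩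
  have hwv := hT.dist_eq_add_one_of_mem_halfTree huv hw
  have closer : ∀ z ∈ G.neighborSet w, G.dist z v + 1 = G.dist w v := fun z hz => by
    rcases hT.dist_eq_dist_add_one_of_adj' v hz with h | h
    · exact h.symm
    · have hzu := hT.connected.dist_triangle (u := z) (v := w) (w := u)
      rw [dist_eq_one_iff_adj.2 (G.adj_symm hz)] at hzu
      have := hmax z (show G.dist z u < G.dist z v by omega)
      omega
  exact ⟨w, hw, fun z₁ h₁ z₂ h₂ => hT.eq_of_adj_of_dist_add_one_eq h₁ h₂ (closer z₁ h₁) (closer z₂ h₂)⟩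

end IsTree

end SimpleGraph

namespace HFT

open SimpleGraph

variable (H : HFT Idx Vtx F) {U V : Idx} {u v : Vtx U} {u' v' : Vtx V}

theorem mark_mem_Q (f : F) : (fun U => H.mark U f) ∈ H.Q :=
  ⟨fun U V => H.mark_consistent_t f U V, fun U V => H.mark_consistent_n f U V⟩

theorem halfSpace_nonempty (huv : (H.G U).Adj u v) : (H.halfSpace U u v).Nonempty := by
  obtain ⟨w, hw, hleaf⟩ := (H.tree U).exists_mem_halfTree_subsingleton_neighborSet huv
  obtain ⟨f, rfl⟩ := H.leaf_marked U w hleaf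
  exact ⟨_, H.mark_mem_Q f, hw⟩

theorem halfSpace_inter_halfSpace_swap : H.halfSpace U u v ∩ H.halfSpace U v u = ∅ :=
  Set.eq_empty_of_forall_notMem fun _ hx => not_mem_halfTree_swap_of_mem hx.1.2 hx.2.2

theorem mem_halfSpace_swap_of_not_mem (huv' : (H.G V).Adj u' v') {x : ∀ W, Vtx W}
    (hx : x ∈ H.Q) (hx' : x ∉ H.halfSpace V u' v') : x ∈ H.halfSpace V v' u' :=
  ⟨hx, ((H.tree V).mem_halfTree_or_mem_halfTree_swap huv' (x V)).resolve_left
    fun h => hx' ⟨hx, h⟩⟩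

theorem inter_halfSpace_swap_nonempty_of_not_subset (huv' : (H.G V).Adj u' v')
    (h : ¬ H.halfSpace U u v ⊆ H.halfSpace V u' v') :
    (H.halfSpace U u v ∩ H.halfSpace V v' u').Nonempty := by
  obtain ⟨x, hx, hx'⟩ := Set.not_subset.1 h
  exact ⟨x, hx, H.mem_halfSpace_swap_of_not_mem huv' hx.1 hx'⟩

variable {H}

theorem WallTransverse.crosses (huv' : (H.G V).Adj u' v')
    (h : H.WallTransverse U u v V u' v') : H.Crosses U u v V u' v' :=
  ⟨H.inter_halfSpace_swap_nonempty_of_not_subset huv'.symm h.2.1,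
    H.inter_halfSpace_swap_nonempty_of_not_subset huv' h.1,
    H.inter_halfSpace_swap_nonempty_of_not_subset huv'.symm h.2.2.2,
    H.inter_halfSpace_swap_nonempty_of_not_subset huv' h.2.2.1⟩

theorem Crosses.symm (h : H.Crosses U u v V u' v') : H.Crosses V u' v' U u v := by
  obtain ⟨h₁, h₂, h₃, h₄⟩ := h
  rw [Set.inter_comm] at h₁ h₂ h₃ h₄
  exact ⟨h₁, h₃, h₂, h₄⟩

theorem Crosses.swap_left (h : H.Crosses U u v V u' v') : H.Crosses U v u V u' v' :=
  ⟨h.2.2.1, h.2.2.2, h.1, h.2.1⟩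

theorem Crosses.swap_right (h : H.Crosses U u v V u' v') : H.Crosses U u v V v' u' :=
  ⟨h.2.1, h.1, h.2.2.2, h.2.2.1⟩

theorem not_crosses_of_halfTree_subset {u' v' : Vtx U}
    (h : (H.G U).halfTree u v ⊆ (H.G U).halfTree u' v') : ¬ H.Crosses U u v U u' v' :=
  fun ⟨_, ⟨_, hx, hx'⟩, _⟩ => not_mem_halfTree_swap_of_mem (h hx.2) hx'.2

theorem not_crosses_same_domain {u' v' : Vtx U} (huv : (H.G U).Adj u v)
    (huv' : (H.G U).Adj u' v') : ¬ H.Crosses U u v U u' v' := by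
  rcases (H.tree U).halfTree_subset_of_adj huv huv' with (h | h) | (h | h)
  · exact not_crosses_of_halfTree_subset h
  · exact fun hc => not_crosses_of_halfTree_subset h hc.swap_right
  · exact fun hc => not_crosses_of_halfTree_subset h hc.swap_left
  · exact fun hc => not_crosses_of_halfTree_subset h hc.swap_left.swap_right

theorem not_crosses_of_pnest (hVU : H.pnest V U) (huv : (H.G U).Adj u v)
    (hδ : H.δup V U ∉ (H.G U).halfTree u v) : ¬ H.Crosses U u v V u' v' := by
  rintro ⟨⟨x, hxU, hxV⟩, ⟨y, hyU, hyV⟩, -⟩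
  have hx := (hxU.1.2 U V hVU).resolve_left (ne_of_mem_of_not_mem hxU.2 hδ)
  have hy := (hyU.1.2 U V hVU).resolve_left (ne_of_mem_of_not_mem hyU.2 hδ)
  have hxy : x V = y V := by
    rw [hx, hy]
    exact H.bgi_const U V hVU _ _
      ((H.tree U).treeSameComp_of_mem_halfTree huv hδ hxU.2 hyU.2)
  exact not_mem_halfTree_swap_of_mem hxV.2 (hxy ▸ hyV.2)

theorem not_crosses_of_transv (hUV : H.transv U V) (hδ : H.δup V U ∉ (H.G U).halfTree u v)
    (hδ' : H.δup U V ∉ (H.G V).halfTree u' v') : ¬ H.Crosses U u v V u' v' := by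
  rintro ⟨⟨x, hxU, hxV⟩, -⟩
  rcases hxU.1.1 U V hUV with h | h
  · exact hδ (h ▸ hxU.2)
  · exact hδ' (h ▸ hxV.2)

theorem orth_of_crosses (huv : (H.G U).Adj u v) (huv' : (H.G V).Adj u' v')
    (h : H.Crosses U u v V u' v') : H.orth U V := by
  by_contra hUV
  by_cases heq : U = V
  · subst heq
    exact not_crosses_same_domain huv huv' h
  by_cases hVU : H.pnest V U
  · rcases not_mem_halfTree_or_not_mem_halfTree_swap (H.δup V U) with hδ | hδ
    · exact not_crosses_of_pnest hVU huv hδ h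
    · exact not_crosses_of_pnest hVU huv.symm hδ h.swap_left
  by_cases hUV' : H.pnest U V
  · rcases not_mem_halfTree_or_not_mem_halfTree_swap (H.δup U V) with hδ | hδ
    · exact not_crosses_of_pnest hUV' huv' hδ h.symm
    · exact not_crosses_of_pnest hUV' huv'.symm hδ h.symm.swap_left
  have htr : H.transv U V := ⟨heq, hUV', hVU, hUV⟩
  rcases not_mem_halfTree_or_not_mem_halfTree_swap (H.δup V U) with hδ | hδ <;>
    rcases not_mem_halfTree_or_not_mem_halfTree_swap (H.δup U V) with hδ' | hδ'
  · exact not_crosses_of_transv htr hδ hδ' h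
  · exact not_crosses_of_transv htr hδ hδ' h.swap_right
  · exact not_crosses_of_transv htr hδ hδ' h.swap_left
  · exact not_crosses_of_transv htr hδ hδ' h.swap_left.swap_right

variable (H)

theorem exists_pairwise_orth_finset_card_ge {n : ℕ} (lab : Fin n → Idx)
    (h : ∀ i j, i ≠ j → H.orth (lab i) (lab j)) :
    ∃ A : Finset Idx, (∀ a ∈ A, ∀ b ∈ A, a ≠ b → H.orth a b) ∧ n ≤ A.card := by
  classical
  have hinj : Function.Injective lab := fun i j hij =>
    by_contra fun hne => H.orth_irrefl _ (hij ▸ h i j hne)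
  refine ⟨Finset.univ.image lab, ?_, by rw [Finset.card_image_of_injective _ hinj]; simp⟩
  simp only [Finset.mem_image, Finset.mem_univ, true_and]
  rintro _ ⟨i, rfl⟩ _ ⟨j, rfl⟩ hne
  exact h i j (ne_of_apply_ne lab hne)

end HFT

/-- **The pocset of half-spaces** (Proposition `pocset`, finite case). -/
theorem pocset_of_halfspaces (H : HFT Idx Vtx F) :
    -- every half-space is nonempty and disjoint from its complementary half-space
    (∀ (U : Idx) (u v : Vtx U), (H.G U).Adj u v →
      (H.halfSpace U u v).Nonempty ∧ H.halfSpace U u v ∩ H.halfSpace U v u = ∅) ∧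
    -- (1) transverse walls have orthogonal labels
    (∀ (U V : Idx) (u v : Vtx U) (u' v' : Vtx V),
      (H.G U).Adj u v → (H.G V).Adj u' v' →
      H.WallTransverse U u v V u' v' → H.orth U V) ∧
    -- (2) any family of pairwise transverse walls has cardinality at most the maximal
    -- cardinality of a pairwise-orthogonal subset of the index set (finite width)
    (∀ (n : ℕ) (lab : Fin n → Idx) (e : (i : Fin n) → Vtx (lab i) × Vtx (lab i)),
      (∀ i, (H.G (lab i)).Adj (e i).1 (e i).2) →
      (∀ i j, i ≠ j →
        H.WallTransverse (lab i) (e i).1 (e i).2 (lab j) (e j).1 (e j).2) →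
      ∃ A : Finset Idx, (∀ a ∈ A, ∀ b ∈ A, a ≠ b → H.orth a b) ∧ n ≤ A.card) := by
  refine ⟨fun U u v huv => ⟨H.halfSpace_nonempty huv, H.halfSpace_inter_halfSpace_swap⟩,
    fun U V u v u' v' huv huv' hW => HFT.orth_of_crosses huv huv' (hW.crosses huv'),
    fun n lab e he hW => H.exists_pairwise_orth_finset_card_ge lab fun i j hij => ?_⟩
  exact HFT.orth_of_crosses (he i) (he j) ((hW i j hij).crosses (he j))
end

section
/- Nesting criteria for half-spaces (Lemma 'hs nest', sufficiency): Let a hierarchical family of trees be given, with 0-consistent set Q. Let Q_{e,s} and Q_{e′,s′} be half-spaces, where e is an edge of T_U with half-tree s and e′ is an edge of T_V with half-tree s′. Then Q_{e,s} ⊆ Q_{e′,s′} provided at least one of the following holds: (1) U = V and s ⊆ s′; (2) U ⋔ V, δ^U_V ∈ s′, and δ^V_U ∉ s; (3) V ⊏ U, δ^V_U ∉ s, and the common value of δ^U_V on the component of T_U − δ^V_U containing s lies in s′; (4) U ⊏ V, δ^U_V ∈ s′, and the common value of δ^V_U on the component of T_V − δ^U_V containing the complementary half-tree s′* lies outside s.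 -/
variable {Idx : Type*} [Fintype Idx] {Vtx : Idx → Type*} [∀ U, Fintype (Vtx U)]
  {F : Type*} [Fintype F]

/-! A half-space `Q_{e,s}` constrains only the `U`-coordinate, so each criterion amounts to
locating `x_V` for `x ∈ Q` with `x_U ∈ s`. 0-consistency of `x` gives two alternatives for the
pair `(U, V)`. One puts `x_U` or `x_V` on a projection vertex `δ`, which the hypotheses keep out of
the relevant half-tree. The other pins `x_V` to `δ^U_V` in the transverse case, and in the nested
cases is settled by the bounded geodesic image property: a half-tree of an edge that does not
contain `δ^V_U` lies in a single component of `T_U − δ^V_U`. -/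

namespace SimpleGraph

variable {α : Type*} {G : SimpleGraph α} {a b u v w z : α}

lemma Walk.dist_add_dist_of_mem_support {p : G.Walk a b} (hp : p.length = G.dist a b)
    (hz : z ∈ p.support) : G.dist a z + G.dist z b = G.dist a b := by
  classical
  rw [← hp, ← p.take_spec hz, Walk.length_append,
    length_eq_dist_of_subwalk hp (p.isSubwalk_takeUntil hz),
    length_eq_dist_of_subwalk hp (p.isSubwalk_dropUntil hz)]

lemma IsAcyclic.length_eq_dist_of_isPath (hG : G.IsAcyclic) {p : G.Walk a b}
    (hp : p.IsPath) : p.length = G.dist a b := by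
  obtain ⟨q, hq, hql⟩ := p.reachable.exists_path_of_dist
  rw [← hql, Subtype.mk.inj (hG.subsingleton_path a b |>.elim ⟨p, hp⟩ ⟨q, hq⟩)]

lemma Connected.dist_lt_of_mem_support (hG : G.Connected) {p : G.Walk a u}
    (hp : p.length = G.dist a u) (ha : G.dist a u < G.dist a v) (hz : z ∈ p.support) :
    G.dist z u < G.dist z v := by
  have hsplit := Walk.dist_add_dist_of_mem_support hp hz
  have htri : G.dist a v ≤ G.dist a z + G.dist z v := hG.dist_triangle
  omega

/-- The geodesics `a → u` and `v → b` stay on opposite sides of the edge, so together with the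
edge they form a path, which in a tree is the geodesic. -/
lemma IsTree.dist_eq_of_adj (hG : G.IsTree) (hadj : G.Adj u v)
    (ha : G.dist a u < G.dist a v) (hb : G.dist b v < G.dist b u) :
    G.dist a b = G.dist a u + 1 + G.dist b v := by
  obtain ⟨p, hp, hpl⟩ := hG.connected.exists_path_of_dist a u
  obtain ⟨q, hq, hql⟩ := hG.connected.exists_path_of_dist b v
  have hpath : (p.append (Walk.cons hadj q.reverse)).IsPath := by
    rw [Walk.isPath_def, Walk.support_append, Walk.support_cons, List.tail_cons,
      Walk.support_reverse, List.nodup_append]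
    refine ⟨hp.support_nodup, List.nodup_reverse.mpr hq.support_nodup, ?_⟩
    intro z hzp z' hzq hzz'
    subst hzz'
    have := hG.connected.dist_lt_of_mem_support hpl ha hzp
    have := hG.connected.dist_lt_of_mem_support hql hb (List.mem_reverse.mp hzq)
    omega
  have hlen := hG.isAcyclic.length_eq_dist_of_isPath hpath
  rw [Walk.length_append, Walk.length_cons, Walk.length_reverse, hpl, hql] at hlen
  omega

lemma IsTree.treeSameComp_of_dist_lt (hG : G.IsTree) (hadj : G.Adj u v)
    (ha : G.dist a u < G.dist a v) (hb : G.dist b u < G.dist b v)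
    (hw : ¬ G.dist w u < G.dist w v) : treeSameComp G w a b := by
  have hw' : G.dist w v < G.dist w u := by
    have := hG.dist_ne_of_adj w hadj
    omega
  have haw := hG.dist_eq_of_adj hadj ha hw'
  have hbw := hG.dist_eq_of_adj hadj hb hw'
  have hab : G.dist a b ≤ G.dist a u + G.dist u b := hG.connected.dist_triangle
  rw [dist_comm (u := u)] at hab
  refine ⟨fun h => hw (h ▸ ha), fun h => hw (h ▸ hb), ?_⟩
  rw [dist_comm (u := w)]
  omega

end SimpleGraph

namespace HFT

variable (H : HFT Idx Vtx F) {U V : Idx}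

lemma mem_halfTree_left {u v : Vtx U} (h : (H.G U).Adj u v) : u ∈ H.halfTree U u v := by
  simp [halfTree, SimpleGraph.dist_eq_one_iff_adj.mpr h]

lemma mem_halfTree_swap {u v w : Vtx U} (h : (H.G U).Adj u v) (hw : w ∉ H.halfTree U u v) :
    w ∈ H.halfTree U v u := by
  have := (H.tree U).dist_ne_of_adj w h
  simp only [halfTree, Set.mem_ofPred_eq] at hw ⊢
  omega

lemma δdown_eq_of_mem_halfTree (hVU : H.pnest V U) {u v a b : Vtx U} (h : (H.G U).Adj u v)
    (hδ : H.δup V U ∉ H.halfTree U u v) (ha : a ∈ H.halfTree U u v)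
    (hb : b ∈ H.halfTree U u v) : H.δdown U V a = H.δdown U V b :=
  H.bgi_const U V hVU a b ((H.tree U).treeSameComp_of_dist_lt h ha hb hδ)

lemma halfSpace_subset_of_halfTree_subset {u₁ u₂ u₁' u₂' : Vtx U}
    (hs : H.halfTree U u₁ u₂ ⊆ H.halfTree U u₁' u₂') :
    H.halfSpace U u₁ u₂ ⊆ H.halfSpace U u₁' u₂' :=
  fun _ hx => ⟨hx.1, hs hx.2⟩

lemma halfSpace_subset_of_transv {u₁ u₂ : Vtx U} {u₁' u₂' : Vtx V} (hUV : H.transv U V)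
    (hδ' : H.δup U V ∈ H.halfTree V u₁' u₂') (hδ : H.δup V U ∉ H.halfTree U u₁ u₂) :
    H.halfSpace U u₁ u₂ ⊆ H.halfSpace V u₁' u₂' := by
  rintro x ⟨hxQ, hxU⟩
  refine ⟨hxQ, ?_⟩
  rcases hxQ.1 U V hUV with hxδ | hxδ
  · exact absurd (hxδ ▸ hxU) hδ
  · exact hxδ ▸ hδ'

lemma halfSpace_subset_of_pnest_target {u₁ u₂ : Vtx U} {u₁' u₂' : Vtx V}
    (h : (H.G U).Adj u₁ u₂) (hVU : H.pnest V U) (hδ : H.δup V U ∉ H.halfTree U u₁ u₂)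
    (hval : H.δdown U V u₁ ∈ H.halfTree V u₁' u₂') :
    H.halfSpace U u₁ u₂ ⊆ H.halfSpace V u₁' u₂' := by
  rintro x ⟨hxQ, hxU⟩
  refine ⟨hxQ, ?_⟩
  rcases hxQ.2 U V hVU with hxδ | hxV
  · exact absurd (hxδ ▸ hxU) hδ
  · rwa [hxV, H.δdown_eq_of_mem_halfTree hVU h hδ hxU (H.mem_halfTree_left h)]

lemma halfSpace_subset_of_pnest_source {u₁ u₂ : Vtx U} {u₁' u₂' : Vtx V}
    (h' : (H.G V).Adj u₁' u₂') (hUV : H.pnest U V) (hδ : H.δup U V ∈ H.halfTree V u₁' u₂')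
    (hval : H.δdown V U u₂' ∉ H.halfTree U u₁ u₂) :
    H.halfSpace U u₁ u₂ ⊆ H.halfSpace V u₁' u₂' := by
  rintro x ⟨hxQ, hxU⟩
  refine ⟨hxQ, by_contra fun hxV => ?_⟩
  rcases hxQ.2 V U hUV with hxδ | hxU'
  · exact hxV (hxδ ▸ hδ)
  · have hδ' : H.δup U V ∉ H.halfTree V u₂' u₁' := lt_asymm (α := ℕ) hδ
    have hconst := H.δdown_eq_of_mem_halfTree hUV h'.symm hδ'
      (H.mem_halfTree_swap h' hxV) (H.mem_halfTree_left h'.symm)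
    exact hval (hconst ▸ hxU' ▸ hxU)

end HFT

/-- **Nesting criteria for half-spaces** (Lemma `hs nest`, sufficiency). The half-space
of the edge `{u₁, u₂}` of `T_U` on the `u₁`-side is contained in the half-space of the
edge `{u₁', u₂'}` of `T_V` on the `u₁'`-side in each of the four listed situations. -/
theorem hs_nest (H : HFT Idx Vtx F) :
    -- (1) same domain, nested half-trees
    (∀ (U : Idx) (u₁ u₂ u₁' u₂' : Vtx U),
      (H.G U).Adj u₁ u₂ → (H.G U).Adj u₁' u₂' →
      H.halfTree U u₁ u₂ ⊆ H.halfTree U u₁' u₂' →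
      H.halfSpace U u₁ u₂ ⊆ H.halfSpace U u₁' u₂') ∧
    -- (2) transverse domains: `δ^U_V ∈ s'` and `δ^V_U ∉ s`
    (∀ (U V : Idx) (u₁ u₂ : Vtx U) (u₁' u₂' : Vtx V),
      (H.G U).Adj u₁ u₂ → (H.G V).Adj u₁' u₂' → H.transv U V →
      H.δup U V ∈ H.halfTree V u₁' u₂' → H.δup V U ∉ H.halfTree U u₁ u₂ →
      H.halfSpace U u₁ u₂ ⊆ H.halfSpace V u₁' u₂') ∧
    -- (3) `V ⊏ U`: `δ^V_U ∉ s` and the common value of `δ^U_V` on the component of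
    -- `T_U − δ^V_U` containing `s` (represented by `u₁ ∈ s`) lies in `s'`
    (∀ (U V : Idx) (u₁ u₂ : Vtx U) (u₁' u₂' : Vtx V),
      (H.G U).Adj u₁ u₂ → (H.G V).Adj u₁' u₂' → H.pnest V U →
      H.δup V U ∉ H.halfTree U u₁ u₂ → H.δdown U V u₁ ∈ H.halfTree V u₁' u₂' →
      H.halfSpace U u₁ u₂ ⊆ H.halfSpace V u₁' u₂') ∧
    -- (4) `U ⊏ V`: `δ^U_V ∈ s'` and the common value of `δ^V_U` on the component of
    -- `T_V − δ^U_V` containing the complementary half-tree `s'*` (represented by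
    -- `u₂' ∈ s'*`) lies outside `s`
    (∀ (U V : Idx) (u₁ u₂ : Vtx U) (u₁' u₂' : Vtx V),
      (H.G U).Adj u₁ u₂ → (H.G V).Adj u₁' u₂' → H.pnest U V →
      H.δup U V ∈ H.halfTree V u₁' u₂' → H.δdown V U u₂' ∉ H.halfTree U u₁ u₂ →
      H.halfSpace U u₁ u₂ ⊆ H.halfSpace V u₁' u₂') :=
  ⟨fun _ _ _ _ _ _ _ hs => H.halfSpace_subset_of_halfTree_subset hs,
    fun _ _ _ _ _ _ _ _ hUV hδ' hδ => H.halfSpace_subset_of_transv hUV hδ' hδ,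
    fun _ _ _ _ _ _ h _ hVU hδ hval => H.halfSpace_subset_of_pnest_target h hVU hδ hval,
    fun _ _ _ _ _ _ _ h' hUV hδ hval => H.halfSpace_subset_of_pnest_source h' hUV hδ hval⟩
end

section
/- Closure of the model under coordinatewise medians (Lemma 'Q median'): Let a hierarchical family of trees be given, with 0-consistent set Q. For all â, b̂, ĉ ∈ Q, the coordinatewise median tuple (m_{T_U}(â_U, b̂_U, ĉ_U))_{U∈𝒰} is 0-consistent, i.e. belongs to Q. -/
variable {Idx : Type*} [Fintype Idx] {Vtx : Idx → Type*} [∀ U, Fintype (Vtx U)]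
  {F : Type*} [Fintype F]

/-!
In a tree the median of three vertices equals any vertex that two of them equal, and, when
it is not the deleted vertex `w`, it lies in the same component of the tree minus `w` as two
of them. Each 0-consistency condition is a dichotomy satisfied by `a`, `b` and `c`, so two of
them satisfy the same alternative, and the median inherits it; in the nested case this goes
through the bounded geodesic image property.
-/

namespace SimpleGraph

variable {α : Type*} {G : SimpleGraph α}

lemma Walk.IsPath.append_of_support_inter {u v w : α} {p : G.Walk u v} {q : G.Walk v w}
    (hp : p.IsPath) (hq : q.IsPath) (h : ∀ x ∈ p.support, x ∈ q.support → x = v) :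
    (p.append q).IsPath := by
  rw [Walk.isPath_def, Walk.support_append, List.nodup_append]
  refine ⟨hp.support_nodup, hq.support_nodup.tail, fun x hxp y hyq hxy => ?_⟩
  subst hxy
  have hxv : x = v := h x hxp (q.cons_tail_support ▸ List.mem_cons_of_mem _ hyq)
  subst hxv
  exact (List.nodup_cons.mp (q.cons_tail_support ▸ hq.support_nodup)).1 hyq

lemma IsTree.length_eq_dist_of_isPath (hT : G.IsTree) {u v : α} {p : G.Walk u v}
    (hp : p.IsPath) : p.length = G.dist u v := by
  obtain ⟨q, hq, hlen⟩ := hT.connected.exists_path_of_dist u v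
  obtain ⟨_, -, huniq⟩ := hT.existsUnique_path u v
  rw [(huniq p hp).trans (huniq q hq).symm, hlen]

lemma IsTree.dist_add_dist_of_mem_support (hT : G.IsTree) {u v x : α} {p : G.Walk u v}
    (hp : p.IsPath) (hx : x ∈ p.support) : G.dist u x + G.dist x v = G.dist u v := by
  classical
  rw [← hT.length_eq_dist_of_isPath (hp.takeUntil hx),
    ← hT.length_eq_dist_of_isPath (hp.dropUntil hx), ← Walk.length_append, p.take_spec hx,
    hT.length_eq_dist_of_isPath hp]

/-- The median is the vertex of the `a`–`b` geodesic closest to `c`. -/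
lemma IsTree.exists_isTreeMedian (hT : G.IsTree) (a b c : α) :
    ∃ m, IsTreeMedian G a b c m := by
  classical
  obtain ⟨p, hp, -⟩ := hT.connected.exists_path_of_dist a b
  obtain ⟨m, hm, hmin⟩ := p.support.toFinset.exists_min_image (G.dist · c) ⟨a, by simp⟩
  rw [List.mem_toFinset] at hm
  obtain ⟨q, hq, -⟩ := hT.connected.exists_path_of_dist m c
  have hinter : ∀ x ∈ p.support, x ∈ q.support → x = m := by
    intro x hxp hxq
    have hsplit := hT.dist_add_dist_of_mem_support hq hxq
    have hle := hmin x (List.mem_toFinset.mpr hxp)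
    exact ((hT.connected.dist_eq_zero_iff).mp (by omega)).symm
  have hac := hT.length_eq_dist_of_isPath
    ((hp.takeUntil hm).append_of_support_inter hq
      fun x hx => hinter x (p.support_takeUntil_subset_support hm hx))
  have hbc := hT.length_eq_dist_of_isPath
    ((hp.dropUntil hm).reverse.append_of_support_inter hq fun x hx =>
      hinter x (p.support_dropUntil_subset_support hm (by simpa using hx)))
  rw [Walk.length_append, hT.length_eq_dist_of_isPath (hp.takeUntil hm),
    hT.length_eq_dist_of_isPath hq] at hac
  rw [Walk.length_append, hT.length_eq_dist_of_isPath (hp.dropUntil hm).reverse,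
    hT.length_eq_dist_of_isPath hq] at hbc
  exact ⟨m, hT.dist_add_dist_of_mem_support hp hm, hac, hbc⟩

end SimpleGraph

def AtLeastTwo (p q r : Prop) : Prop := (p ∧ q) ∨ (p ∧ r) ∨ (q ∧ r)

lemma AtLeastTwo.mono {p q r p' q' r' : Prop} (hp : p → p') (hq : q → q') (hr : r → r')
    (h : AtLeastTwo p q r) : AtLeastTwo p' q' r' := by
  unfold AtLeastTwo at *; tauto

lemma atLeastTwo_or_atLeastTwo {p₁ p₂ p₃ q₁ q₂ q₃ : Prop} (h₁ : p₁ ∨ q₁) (h₂ : p₂ ∨ q₂)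
    (h₃ : p₃ ∨ q₃) : AtLeastTwo p₁ p₂ p₃ ∨ AtLeastTwo q₁ q₂ q₃ := by
  unfold AtLeastTwo; tauto

lemma atLeastTwo_of_or {p q r : Prop} (hpq : p ∨ q) (hpr : p ∨ r) (hqr : q ∨ r) :
    AtLeastTwo p q r := by
  unfold AtLeastTwo; tauto

section TreeMedian

variable {α : Type*} {G : SimpleGraph α}

lemma eq_of_dist_add_dist_eq_dist_self (hG : G.Connected) {m q : α}
    (h : G.dist q m + G.dist m q = G.dist q q) : m = q :=
  (hG.dist_eq_zero_iff).mp (by rw [SimpleGraph.dist_self] at h; omega)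

lemma IsTreeMedian.eq_of_atLeastTwo (hG : G.Connected) {a b c m q : α}
    (hm : IsTreeMedian G a b c m) (h : AtLeastTwo (a = q) (b = q) (c = q)) : m = q := by
  obtain ⟨hab, hac, hbc⟩ := hm
  rcases h with ⟨rfl, rfl⟩ | ⟨rfl, rfl⟩ | ⟨rfl, rfl⟩
  · exact eq_of_dist_add_dist_eq_dist_self hG hab
  · exact eq_of_dist_add_dist_eq_dist_self hG hac
  · exact eq_of_dist_add_dist_eq_dist_self hG hbc

lemma dist_add_dist_eq_of_not_treeSameComp {w x m : α} (hmw : m ≠ w)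
    (h : ¬ treeSameComp G w x m) : G.dist x w + G.dist w m = G.dist x m := by
  by_cases hxw : x = w
  · simp [hxw]
  · by_contra hne
    exact h ⟨hxw, hmw, hne⟩

/-- If `m ≠ w` lies on the geodesic from `x` to `y`, then `w` cannot separate `m` from both
`x` and `y`: otherwise `w` would lie on both halves of that geodesic. -/
lemma treeSameComp_or_treeSameComp (hG : G.Connected) {w x y m : α} (hmw : m ≠ w)
    (hxy : G.dist x m + G.dist m y = G.dist x y) :
    treeSameComp G w x m ∨ treeSameComp G w y m := by
  by_contra! h
  have hx := dist_add_dist_eq_of_not_treeSameComp hmw h.1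
  have hy := dist_add_dist_eq_of_not_treeSameComp hmw h.2
  have hpos : 0 < G.dist w m := hG.pos_dist_of_ne hmw.symm
  have htri : G.dist x y ≤ G.dist x w + G.dist w y := hG.dist_triangle
  rw [SimpleGraph.dist_comm (u := m) (v := y)] at hxy
  rw [SimpleGraph.dist_comm (u := y) (v := w)] at hy
  omega

lemma IsTreeMedian.atLeastTwo_treeSameComp (hG : G.Connected) {a b c m w : α}
    (hm : IsTreeMedian G a b c m) (hmw : m ≠ w) :
    AtLeastTwo (treeSameComp G w a m) (treeSameComp G w b m) (treeSameComp G w c m) :=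
  atLeastTwo_of_or (treeSameComp_or_treeSameComp hG hmw hm.1)
    (treeSameComp_or_treeSameComp hG hmw hm.2.1) (treeSameComp_or_treeSameComp hG hmw hm.2.2)

end TreeMedian

namespace HFT

variable {Idx : Type*} [Fintype Idx] {Vtx : Idx → Type*} [∀ U, Fintype (Vtx U)]
  {F : Type*} [Fintype F] (H : HFT Idx Vtx F)

lemma eq_δdown_of_treeSameComp {x : ∀ U, Vtx U} (hx : x ∈ H.Q) {U V : Idx}
    (hVU : H.pnest V U) {y : Vtx U} (hxy : treeSameComp (H.G U) (H.δup V U) (x U) y) :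
    x V = H.δdown U V y :=
  ((hx.2 U V hVU).resolve_left hxy.1).trans (H.bgi_const U V hVU _ _ hxy)

variable {H}

lemma median_transv {a b c m : ∀ U, Vtx U} (ha : a ∈ H.Q) (hb : b ∈ H.Q) (hc : c ∈ H.Q)
    (hm : ∀ U, IsTreeMedian (H.G U) (a U) (b U) (c U) (m U)) {U V : Idx}
    (hUV : H.transv U V) : m U = H.δup V U ∨ m V = H.δup U V :=
  (atLeastTwo_or_atLeastTwo (ha.1 U V hUV) (hb.1 U V hUV) (hc.1 U V hUV)).imp
    ((hm U).eq_of_atLeastTwo (H.tree U).connected) ((hm V).eq_of_atLeastTwo (H.tree V).connected)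

lemma median_pnest {a b c m : ∀ U, Vtx U} (ha : a ∈ H.Q) (hb : b ∈ H.Q) (hc : c ∈ H.Q)
    (hm : ∀ U, IsTreeMedian (H.G U) (a U) (b U) (c U) (m U)) {U V : Idx}
    (hVU : H.pnest V U) : m U = H.δup V U ∨ m V = H.δdown U V (m U) := by
  refine or_iff_not_imp_left.mpr fun hmU => (hm V).eq_of_atLeastTwo (H.tree V).connected ?_
  exact ((hm U).atLeastTwo_treeSameComp (H.tree U).connected hmU).mono
    (H.eq_δdown_of_treeSameComp ha hVU) (H.eq_δdown_of_treeSameComp hb hVU)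
    (H.eq_δdown_of_treeSameComp hc hVU)

end HFT

/-- **Closure of the model under coordinatewise medians** (Lemma `Q median`). -/
theorem q_median (H : HFT Idx Vtx F) (a b c : ∀ U, Vtx U)
    (ha : a ∈ H.Q) (hb : b ∈ H.Q) (hc : c ∈ H.Q) :
    (∃ m : ∀ U, Vtx U, ∀ U, IsTreeMedian (H.G U) (a U) (b U) (c U) (m U)) ∧
    ∀ m : ∀ U, Vtx U,
      (∀ U, IsTreeMedian (H.G U) (a U) (b U) (c U) (m U)) → m ∈ H.Q := by
  refine ⟨?_, fun m hm => ⟨fun U V => HFT.median_transv ha hb hc hm,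
    fun U V => HFT.median_pnest ha hb hc hm⟩⟩
  choose m hm using fun U => (H.tree U).exists_isTreeMedian (a U) (b U) (c U)
  exact ⟨m, hm⟩
end
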